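/- arXiv:2509.21915 — 2 statements merged into one kernel-verified Lean document; each statement's English description precedes it below -/
import Mathlib

section
/- Every deck transformation φ of the universal covering F: B̃H(J) → BH(J) is given by the action of a unique element gW_J ∈ N(W,J): if φ(e,J) = (g,J) then φ(x,I) = (gx', I) for all chambers, where gx' is the minimal-length representative of gxW_I. Consequently Deck(F) ≅ N(W,J) = Norm_W(W_J)/W_J. -/
open CoxeterSystem

/-- `v` is a nonnegative linear combination of the vectors `α b`. -/
def InNonnegSpan {B V : Type*} [AddCommGroup V] [Module ℝ V] (α : B → V) (v : V) : Prop :=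
  ∃ c : B →₀ ℝ, (∀ b, 0 ≤ c b) ∧ v = c.sum fun b r => r • α b

/-- The reflection representation of a Coxeter system, axiomatised: a representation `ρ` of `W`
on a real vector space `V` with linearly independent simple roots `α i` spanning `V`, such that
each simple reflection negates its simple root, every root `w · α i` is positive or negative,
and positivity of `w · α i` is detected by the length function. -/
structure ReflRep {B W : Type*} [Group W] {M : CoxeterMatrix B} (cs : CoxeterSystem M W)
    (V : Type*) [AddCommGroup V] [Module ℝ V] where
  ρ : Representation ℝ W V
  α : B → V
  indep : LinearIndependent ℝ α
  spans : Submodule.span ℝ (Set.range α) = ⊤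
  refl_simple : ∀ i : B, ρ (cs.simple i) (α i) = -α i
  root_pos_or_neg : ∀ (w : W) (i : B),
    InNonnegSpan α (ρ w (α i)) ∨ InNonnegSpan α (-(ρ w (α i)))
  pos_iff_length : ∀ (w : W) (i : B),
    InNonnegSpan α (ρ w (α i)) ↔ cs.length (w * cs.simple i) = cs.length w + 1

/-- The standard parabolic subgroup `W_J`. -/
def parabolic {B W : Type*} [Group W] {M : CoxeterMatrix B} (cs : CoxeterSystem M W)
    (J : Set B) : Subgroup W :=
  Subgroup.closure (cs.simple '' J)

open CategoryTheory

universe v u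

/-- The star of an object in a groupoid: all morphisms out of it. -/
def GroupoidStar (C : Type u) [Groupoid.{v} C] (x : C) : Type (max u v) := Σ y : C, x ⟶ y

/-- The map induced by a functor on stars. -/
def starMap {C : Type u} {D : Type u} [Groupoid.{v} C] [Groupoid.{v} D] (F : C ⥤ D) (x : C) :
    GroupoidStar C x → GroupoidStar D (F.obj x) :=
  fun p => ⟨F.obj p.1, F.map p.2⟩

/-- A functor of groupoids is a covering if every morphism downstairs lifts uniquely once a lift
of its source is chosen; equivalently, it induces bijections on stars. -/
def IsGroupoidCovering {C : Type u} {D : Type u} [Groupoid.{v} C] [Groupoid.{v} D]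
    (F : C ⥤ D) : Prop :=
  ∀ x : C, Function.Bijective (starMap F x)

/-- The deck transformation group of a functor `F : C ⥤ D`: automorphisms `φ` of `C` with
`φ ⋙ F = F` (strictly), i.e. automorphisms of the object `(C, F)` of the over-category
`Cat / D`. -/
def Deck {C : Type u} {D : Type u} [Groupoid.{v} C] [Groupoid.{v} D] (F : C ⥤ D) :=
  Aut (Over.mk (show Cat.of C ⟶ Cat.of D from F.toCatHom))

noncomputable instance {C : Type u} {D : Type u} [Groupoid.{v} C] [Groupoid.{v} D]
    (F : C ⥤ D) : Group (Deck F) := by unfold Deck; infer_instance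

/-- The underlying functor `C ⥤ C` of a deck transformation. -/
def Deck.toFunctor {C : Type u} {D : Type u} [Groupoid.{v} C] [Groupoid.{v} D] {F : C ⥤ D}
    (φ : Deck F) : C ⥤ C := φ.hom.left.toFunctor

/-- A covering is normal if the deck group acts transitively on fibres over objects. -/
def IsNormalCovering {C : Type u} {D : Type u} [Groupoid.{v} C] [Groupoid.{v} D]
    (F : C ⥤ D) : Prop :=
  ∀ x y : C, F.obj x = F.obj y → ∃ φ : Deck F, (Deck.toFunctor φ).obj x = y

/-- The homomorphism of vertex groups induced by a functor. -/
def vertexHom {C : Type u} {D : Type u} [Groupoid.{v} C] [Groupoid.{v} D] (F : C ⥤ D)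
    (x : C) : (x ⟶ x) →* (F.obj x ⟶ F.obj x) where
  toFun f := F.map f
  map_one' := F.map_id x
  map_mul' f g := F.map_comp f g

variable {B W : Type u} [Group W] {V : Type*} [AddCommGroup V] [Module ℝ V]
  {M : CoxeterMatrix B} {cs : CoxeterSystem M W}

/-- `I` and `J` are associates: `W_I` and `W_J` are conjugate in `W`. -/
def IsAssociate (cs : CoxeterSystem M W) (J I : Set B) : Prop :=
  ∃ x : W, Subgroup.map (MulAut.conj x).toMonoidHom (parabolic cs I) = parabolic cs J

/-- A chamber `(x, I)` of the Tits cone intersection, labelled as in the Iyama--Wemyss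
labelling theorem: `W_J x = x W_I` and `x` has minimal length in `x W_I`. -/
structure Chamber (cs : CoxeterSystem M W) (J : Set B) : Type u where
  x : W
  I : Set B
  coset : ((· * x) '' (parabolic cs J : Set W)) = ((x * ·) '' (parabolic cs I : Set W))
  minl : ∀ v ∈ parabolic cs I, cs.length x ≤ cs.length (x * v)

/-- Morphisms of the groupoid `B̃H(J)`: the singleton `{x⁻¹ y}`. -/
def ChamberHom (c d : Chamber cs J) : Type u := {w : W // w = c.x⁻¹ * d.x}

/-- The groupoid `B̃H(J)` with objects the chambers and singleton hom-sets `{x⁻¹y}`. -/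
instance chamberGroupoid (cs : CoxeterSystem M W) (J : Set B) :
    Groupoid (Chamber cs J) where
  Hom c d := ChamberHom c d
  id c := ⟨c.x⁻¹ * c.x, rfl⟩
  comp {a _ c} _ _ := ⟨a.x⁻¹ * c.x, rfl⟩
  id_comp f := Subtype.ext f.2.symm
  comp_id f := Subtype.ext f.2.symm
  assoc _ _ _ := rfl
  inv {a b} _ := ⟨b.x⁻¹ * a.x, rfl⟩
  inv_comp _ := rfl
  comp_inv _ := rfl

/-- An object of the Brink--Howlett groupoid: an associate of `J`.  (The reflection
representation `r` is carried as a parameter so that the hom-sets below make sense.) -/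
structure BHObj (cs : CoxeterSystem M W) (J : Set B) (r : ReflRep cs V) : Type u where
  I : Set B
  assoc : IsAssociate cs J I

/-- Morphisms of the Brink--Howlett groupoid:
`Hom(I, K) = {w ∈ W : {α_i : i ∈ I} = w · {α_k : k ∈ K}}`. -/
def BHHom {r : ReflRep cs V} (I K : BHObj cs J r) : Type u :=
  {w : W // r.α '' I.I = r.ρ w '' (r.α '' K.I)}

private lemma rep_id_aux (ρ : Representation ℝ W V) (S : Set V) :
    S = ρ (1 : W) '' S := by
  rw [map_one]; ext v; simp [Module.End.one_apply]

private lemma rep_comp_aux (ρ : Representation ℝ W V) (u v : W) (S T U : Set V)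
    (hu : S = ρ u '' T) (hv : T = ρ v '' U) : S = ρ (u * v) '' U := by
  rw [hu, hv, map_mul, Set.image_image]
  ext w; simp [Module.End.mul_apply]

private lemma rep_inv_aux (ρ : Representation ℝ W V) (u : W) (S T : Set V)
    (hu : S = ρ u '' T) : T = ρ u⁻¹ '' S := by
  rw [hu, Set.image_image]
  have h : ∀ y : V, ρ u⁻¹ (ρ u y) = y := fun y => by
    rw [← Module.End.mul_apply, ← map_mul, inv_mul_cancel, map_one, Module.End.one_apply]
  ext w; simp [h]

/-- The Brink--Howlett groupoid `BH(J)`. -/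
instance bhGroupoid (cs : CoxeterSystem M W) (J : Set B) (r : ReflRep cs V) :
    Groupoid (BHObj cs J r) where
  Hom I K := BHHom I K
  id I := ⟨1, rep_id_aux r.ρ _⟩
  comp u v := ⟨u.1 * v.1, rep_comp_aux r.ρ u.1 v.1 _ _ _ u.2 v.2⟩
  id_comp _ := Subtype.ext (one_mul _)
  comp_id _ := Subtype.ext (mul_one _)
  assoc _ _ _ := Subtype.ext (mul_assoc _ _ _)
  inv u := ⟨u.1⁻¹, rep_inv_aux r.ρ u.1 _ _ u.2⟩
  inv_comp _ := Subtype.ext (inv_mul_cancel _)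
  comp_inv _ := Subtype.ext (mul_inv_cancel _)

/-- The underlying element of `W` of a morphism of `B̃H(J)`. -/
def chamberHomVal {c d : Chamber cs J} (f : ChamberHom c d) : W := f.1

/-- The underlying element of `W` of a morphism of `BH(J)`. -/
def bhHomVal {r : ReflRep cs V} {I K : BHObj cs J r} (f : BHHom I K) : W := f.1

/-!
Because the hom-sets of `B̃H(J)` are the singletons `{x⁻¹ y}` and `F` remembers both the label `I`
and the element `x⁻¹ y`, a functor `T` with `T ⋙ F = F` keeps every label and every quotient
`x⁻¹ y`, so it is the left translation by `g = (T (1, J)).x`. Since `T (1, J)` is a chamber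
labelled `J`, `g W_J = W_J g`, i.e. `g` normalises `W_J`. If `g ∈ W_J`, then `T (1, J) = (g, J)`
is a chamber, so `g` is the shortest element of `g W_J ∋ 1`, so `g = 1` and `T` is the identity.
Conversely, for `g` in the normaliser let `g'` be the shortest element of `g W_J`. Then `(g', J)`
is a chamber over the same object as `(1, J)`, so lifting paths along the covering `F` from
`(g', J)` gives a translation by `g'`.
-/

theorem Subgroup.mem_normalizer_iff_image_mul_right_eq_image_mul_left {G : Type*} [Group G]
    {s : Set G} {g : G} : g ∈ Subgroup.normalizer s ↔ (· * g) '' s = (g * ·) '' s := by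
  have hconj : (g * ·) '' s = (· * g) '' (MulAut.conj g '' s) := by
    rw [Set.image_image]; simp
  rw [Subgroup.mem_normalizer_iff_conj_image_eq, hconj,
    (Set.image_injective.mpr (mul_left_injective g)).eq_iff, eq_comm]

theorem CoxeterSystem.exists_length_le_length_mul {B W : Type*} [Group W] {M : CoxeterMatrix B}
    (cs : CoxeterSystem M W) (H : Subgroup W) (g : W) :
    ∃ w ∈ H, ∀ v ∈ H, cs.length (g * w) ≤ cs.length (g * w * v) := by
  classical
  have hex : ∃ n, ∃ w ∈ H, cs.length (g * w) = n := ⟨_, 1, H.one_mem, rfl⟩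
  obtain ⟨w, hw, hlen⟩ := Nat.find_spec hex
  exact ⟨w, hw, fun v hv =>
    hlen ▸ Nat.find_min' hex ⟨w * v, H.mul_mem hw hv, by rw [mul_assoc]⟩⟩

theorem BHObj.ext {J : Set B} {r : ReflRep cs V} {I K : BHObj cs J r} (h : I.I = K.I) :
    I = K := by
  cases I; cases K; cases h; rfl

section BHHom

variable {J : Set B} {r : ReflRep cs V}

theorem bhHomVal_comp {I K L : BHObj cs J r} (f : I ⟶ K) (g : K ⟶ L) :
    bhHomVal (f ≫ g) = bhHomVal f * bhHomVal g := rfl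

theorem bhHomVal_eqToHom {I K : BHObj cs J r} (h : I = K) : bhHomVal (eqToHom h) = 1 := by
  subst h; rfl

theorem bhHomVal_congr_heq {I K K' : BHObj cs J r} (h : K = K') {f : I ⟶ K} {g : I ⟶ K'}
    (hfg : HEq f g) : bhHomVal f = bhHomVal g := by
  subst h; cases hfg; rfl

end BHHom

namespace Deck

variable {C D : Type u} [Groupoid.{v} C] [Groupoid.{v} D] {F : C ⥤ D}

theorem toFunctor_comp_self (φ : Deck F) : φ.toFunctor ⋙ F = F :=
  congrArg Cat.Hom.toFunctor φ.hom.w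

theorem toFunctor_injective : Function.Injective (toFunctor : Deck F → C ⥤ C) :=
  fun _ _ h => Iso.ext (Over.OverMorphism.ext (Cat.ext h))

def ofFunctors (T S : C ⥤ C) (hT : T ⋙ F = F) (hS : S ⋙ F = F) (hTS : T ⋙ S = 𝟭 C)
    (hST : S ⋙ T = 𝟭 C) : Deck F where
  hom := Over.homMk T.toCatHom (congrArg Functor.toCatHom hT)
  inv := Over.homMk S.toCatHom (congrArg Functor.toCatHom hS)
  hom_inv_id := Over.OverMorphism.ext (Cat.ext hTS)
  inv_hom_id := Over.OverMorphism.ext (Cat.ext hST)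

end Deck

namespace Chamber

variable {J : Set B}

instance (c d : Chamber cs J) : Subsingleton (c ⟶ d) :=
  ⟨fun f g => Subtype.ext ((f : ChamberHom c d).2.trans (g : ChamberHom c d).2.symm)⟩

def hom (c d : Chamber cs J) : c ⟶ d := ⟨c.x⁻¹ * d.x, rfl⟩

theorem ext {c d : Chamber cs J} (hx : c.x = d.x) (hI : c.I = d.I) : c = d := by
  cases c; cases d; cases hx; cases hI; rfl

def base (cs : CoxeterSystem M W) (J : Set B) : Chamber cs J where
  x := 1
  I := J
  coset := by simp
  minl := fun _ _ => by simp

@[simp]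
theorem base_x : (base cs J).x = 1 := rfl

@[simp]
theorem base_I : (base cs J).I = J := rfl

theorem x_mem_normalizer {c : Chamber cs J} (hI : c.I = J) :
    c.x ∈ Subgroup.normalizer (parabolic cs J : Set W) :=
  Subgroup.mem_normalizer_iff_image_mul_right_eq_image_mul_left.mpr (by simpa [hI] using c.coset)

theorem exists_I_eq_of_mem_normalizer {g : W}
    (hg : g ∈ Subgroup.normalizer (parabolic cs J : Set W)) :
    ∃ c : Chamber cs J, c.I = J ∧ g⁻¹ * c.x ∈ parabolic cs J := by
  obtain ⟨w, hw, hmin⟩ := cs.exists_length_le_length_mul (parabolic cs J) g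
  have hgw : g * w ∈ Subgroup.normalizer (parabolic cs J : Set W) :=
    Subgroup.mul_mem _ hg (Subgroup.le_normalizer hw)
  exact ⟨⟨g * w, J, Subgroup.mem_normalizer_iff_image_mul_right_eq_image_mul_left.mp hgw, hmin⟩,
    rfl, by simpa using hw⟩

def functorOfObj (o : Chamber cs J → Chamber cs J) : Chamber cs J ⥤ Chamber cs J where
  obj := o
  map _ := hom _ _

def Translates (T : Chamber cs J ⥤ Chamber cs J) (g : W) : Prop :=
  ∀ c, (T.obj c).x = g * c.x ∧ (T.obj c).I = c.I

theorem Translates.comp {T S : Chamber cs J ⥤ Chamber cs J} {g h : W} (hT : Translates T g)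
    (hS : Translates S h) : Translates (T ⋙ S) (h * g) := fun c =>
  ⟨by simp [(hS _).1, (hT c).1, mul_assoc], (hS _).2.trans (hT c).2⟩

theorem Translates.eq_id {T : Chamber cs J ⥤ Chamber cs J} {w : W} (hT : Translates T w)
    (hw : w ∈ parabolic cs J) : T = 𝟭 (Chamber cs J) := by
  have hw1 : w = 1 := by
    have h := (T.obj (base cs J)).minl w⁻¹ (by rw [(hT _).2]; exact inv_mem hw)
    simpa [(hT _).1] using h
  exact CategoryTheory.Functor.ext (fun c => Chamber.ext (by simp [(hT c).1, hw1]) (hT c).2)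
    (fun _ _ _ => Subsingleton.elim _ _)

variable {r : ReflRep cs V} {F : Chamber cs J ⥤ BHObj cs J r}

theorem bhHomVal_map
    (hmap : ∀ (c d : Chamber cs J) (f : c ⟶ d), bhHomVal (F.map f) = chamberHomVal f)
    {c d : Chamber cs J} (f : c ⟶ d) : bhHomVal (F.map f) = c.x⁻¹ * d.x :=
  (hmap c d f).trans (f : ChamberHom c d).2

theorem translates_of_comp_eq_self (hobj : ∀ c : Chamber cs J, (F.obj c).I = c.I)
    (hmap : ∀ (c d : Chamber cs J) (f : c ⟶ d), bhHomVal (F.map f) = chamberHomVal f)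
    {T : Chamber cs J ⥤ Chamber cs J} (hT : T ⋙ F = F) :
    Translates T (T.obj (base cs J)).x := by
  intro c
  constructor
  · have h := congrArg bhHomVal (Functor.congr_hom hT (hom (base cs J) c))
    rw [bhHomVal_comp, bhHomVal_comp, bhHomVal_eqToHom, bhHomVal_eqToHom, Functor.comp_map,
      bhHomVal_map hmap, bhHomVal_map hmap, one_mul, mul_one] at h
    rw [← mul_inv_cancel_left (T.obj (base cs J)).x (T.obj c).x, h, base_x, inv_one, one_mul]
  · have h := congrArg BHObj.I (Functor.congr_obj hT c)
    rwa [Functor.comp_obj, hobj, hobj] at h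

theorem comp_eq_self_of_translates (hobj : ∀ c : Chamber cs J, (F.obj c).I = c.I)
    (hmap : ∀ (c d : Chamber cs J) (f : c ⟶ d), bhHomVal (F.map f) = chamberHomVal f)
    {T : Chamber cs J ⥤ Chamber cs J} {g : W} (hT : Translates T g) : T ⋙ F = F := by
  refine CategoryTheory.Functor.ext
    (fun c => BHObj.ext (by rw [Functor.comp_obj, hobj, hobj, (hT c).2])) (fun c d f => ?_)
  apply Subtype.ext
  change bhHomVal (F.map (T.map f)) = bhHomVal (eqToHom _ ≫ F.map f ≫ eqToHom _)
  rw [bhHomVal_comp, bhHomVal_comp, bhHomVal_eqToHom, bhHomVal_eqToHom, bhHomVal_map hmap,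
    bhHomVal_map hmap, (hT c).1, (hT d).1]
  group

theorem exists_lift (hobj : ∀ c : Chamber cs J, (F.obj c).I = c.I)
    (hmap : ∀ (c d : Chamber cs J) (f : c ⟶ d), bhHomVal (F.map f) = chamberHomVal f)
    (hcov : IsGroupoidCovering F) {a b : Chamber cs J} (hab : F.obj a = F.obj b)
    (c : Chamber cs J) : ∃ d : Chamber cs J, d.I = c.I ∧ a.x⁻¹ * d.x = b.x⁻¹ * c.x := by
  obtain ⟨⟨d, f⟩, hd⟩ := (hcov a).2 ⟨F.obj c, eqToHom hab ≫ F.map (hom b c)⟩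
  obtain ⟨hdc, hf⟩ := Sigma.mk.inj_iff.mp hd
  refine ⟨d, ?_, ?_⟩
  · have h := congrArg BHObj.I hdc
    rwa [hobj, hobj] at h
  · have h := bhHomVal_congr_heq hdc hf
    rwa [bhHomVal_comp, bhHomVal_eqToHom, one_mul, bhHomVal_map hmap, bhHomVal_map hmap] at h

theorem exists_translates (hobj : ∀ c : Chamber cs J, (F.obj c).I = c.I)
    (hmap : ∀ (c d : Chamber cs J) (f : c ⟶ d), bhHomVal (F.map f) = chamberHomVal f)
    (hcov : IsGroupoidCovering F) {a : Chamber cs J} (ha : a.I = J) :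
    ∃ T : Chamber cs J ⥤ Chamber cs J, Translates T a.x := by
  have hab : F.obj a = F.obj (base cs J) := BHObj.ext (by rw [hobj, hobj, ha, base_I])
  choose o hoI hox using exists_lift hobj hmap hcov hab
  refine ⟨functorOfObj o, fun c => ⟨?_, hoI c⟩⟩
  change (o c).x = a.x * c.x
  rw [← mul_inv_cancel_left a.x (o c).x, hox, base_x, inv_one, one_mul]

end Chamber

section DeckGroup

variable {J : Set B} {r : ReflRep cs V} {F : Chamber cs J ⥤ BHObj cs J r}

def deckTranslation (hobj : ∀ c : Chamber cs J, (F.obj c).I = c.I)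
    (hmap : ∀ (c d : Chamber cs J) (f : c ⟶ d), bhHomVal (F.map f) = chamberHomVal f) :
    Deck F →* Subgroup.normalizer (parabolic cs J : Set W) where
  toFun φ := ⟨(φ.toFunctor.obj (Chamber.base cs J)).x, Chamber.x_mem_normalizer
    ((Chamber.translates_of_comp_eq_self hobj hmap φ.toFunctor_comp_self _).2)⟩
  map_one' := rfl
  map_mul' φ _ := Subtype.ext
    (Chamber.translates_of_comp_eq_self hobj hmap φ.toFunctor_comp_self _).1

noncomputable def deckClass (hobj : ∀ c : Chamber cs J, (F.obj c).I = c.I)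
    (hmap : ∀ (c d : Chamber cs J) (f : c ⟶ d), bhHomVal (F.map f) = chamberHomVal f) :
    Deck F →* Subgroup.normalizer (parabolic cs J : Set W) ⧸
      (parabolic cs J).subgroupOf (Subgroup.normalizer (parabolic cs J : Set W)) :=
  (QuotientGroup.mk' _).comp (deckTranslation hobj hmap)

theorem deckClass_injective (hobj : ∀ c : Chamber cs J, (F.obj c).I = c.I)
    (hmap : ∀ (c d : Chamber cs J) (f : c ⟶ d), bhHomVal (F.map f) = chamberHomVal f) :
    Function.Injective (deckClass hobj hmap) := by
  refine (injective_iff_map_eq_one _).mpr fun φ hφ => Deck.toFunctor_injective ?_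
  rw [deckClass, MonoidHom.comp_apply, QuotientGroup.mk'_apply, QuotientGroup.eq_one_iff,
    Subgroup.mem_subgroupOf] at hφ
  exact (Chamber.translates_of_comp_eq_self hobj hmap φ.toFunctor_comp_self).eq_id hφ

theorem deckClass_surjective (hobj : ∀ c : Chamber cs J, (F.obj c).I = c.I)
    (hmap : ∀ (c d : Chamber cs J) (f : c ⟶ d), bhHomVal (F.map f) = chamberHomVal f)
    (hcov : IsGroupoidCovering F) : Function.Surjective (deckClass hobj hmap) := by
  intro q
  obtain ⟨g, rfl⟩ := QuotientGroup.mk'_surjective _ q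
  obtain ⟨a, haJ, hga⟩ := Chamber.exists_I_eq_of_mem_normalizer g.2
  have ha := Chamber.x_mem_normalizer haJ
  -- translating by `b.x ∈ a.x⁻¹ W_J` inverts translating by `a.x`, since both compositions
  -- translate by elements of `W_J`
  obtain ⟨b, hbJ, hab⟩ := Chamber.exists_I_eq_of_mem_normalizer (inv_mem ha)
  rw [inv_inv] at hab
  have hba : b.x * a.x ∈ parabolic cs J := by
    simpa [mul_assoc] using (Subgroup.mem_normalizer_iff''.mp ha _).mp hab
  obtain ⟨T, hT⟩ := Chamber.exists_translates hobj hmap hcov haJ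
  obtain ⟨S, hS⟩ := Chamber.exists_translates hobj hmap hcov hbJ
  refine ⟨Deck.ofFunctors T S (Chamber.comp_eq_self_of_translates hobj hmap hT)
    (Chamber.comp_eq_self_of_translates hobj hmap hS) ((hT.comp hS).eq_id hba)
    ((hS.comp hT).eq_id hab), ?_⟩
  rw [deckClass, MonoidHom.comp_apply, QuotientGroup.mk'_apply, QuotientGroup.mk'_apply,
    QuotientGroup.eq, Subgroup.mem_subgroupOf]
  change (T.obj (Chamber.base cs J)).x⁻¹ * g ∈ parabolic cs J
  simpa [(hT _).1] using inv_mem hga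

end DeckGroup

/-- Every deck transformation `φ` of the universal covering
`F : B̃H(J) → BH(J)` is given by the action of a unique element `g W_J ∈ N(W,J)`: there is
`g ∈ Norm_W(W_J)` such that `φ (x,I) = (gx', I)` with `gx'` in the coset `g x W_I` (hence its
minimal-length representative, since `φ (x,I)` is a chamber), and `g` is unique modulo `W_J`.
Consequently `Deck(F) ≅ N(W,J) = Norm_W(W_J)/W_J`. -/
theorem BH_deck_is_normaliser_quotient (cs : CoxeterSystem M W) (J : Set B) (r : ReflRep cs V)
    (F : Chamber cs J ⥤ BHObj cs J r)
    (hobj : ∀ c : Chamber cs J, (F.obj c).I = c.I)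
    (hmap : ∀ (c d : Chamber cs J) (f : c ⟶ d), bhHomVal (F.map f) = chamberHomVal f)
    (hcov : IsGroupoidCovering F) :
    (∀ φ : Deck F, ∃ g ∈ (Subgroup.normalizer (parabolic cs J : Set W)),
      (∀ c : Chamber cs J, ((Deck.toFunctor φ).obj c).I = c.I ∧
        ((Deck.toFunctor φ).obj c).x ∈ ((g * c.x) * ·) '' (parabolic cs c.I : Set W)) ∧
      (∀ g' : W, g' ∈ (Subgroup.normalizer (parabolic cs J : Set W)) →
        (∀ c : Chamber cs J,
          ((Deck.toFunctor φ).obj c).x ∈ ((g' * c.x) * ·) '' (parabolic cs c.I : Set W)) →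
        g⁻¹ * g' ∈ parabolic cs J)) ∧
    Nonempty (Deck F ≃*
      ((Subgroup.normalizer (parabolic cs J : Set W)) ⧸
        (parabolic cs J).subgroupOf (Subgroup.normalizer (parabolic cs J : Set W)))) := by
  refine ⟨fun φ => ?_, ⟨MulEquiv.ofBijective (deckClass hobj hmap)
    ⟨deckClass_injective hobj hmap, deckClass_surjective hobj hmap hcov⟩⟩⟩
  have hφ := Chamber.translates_of_comp_eq_self hobj hmap φ.toFunctor_comp_self
  refine ⟨(φ.toFunctor.obj (Chamber.base cs J)).x, (deckTranslation hobj hmap φ).2,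
    fun c => ⟨(hφ c).2, 1, one_mem _, (mul_one _).trans (hφ c).1.symm⟩, fun g' _ hg' => ?_⟩
  obtain ⟨v, hv, hg'v⟩ := hg' (Chamber.base cs J)
  simp only [Chamber.base_x, mul_one] at hg'v
  rw [← hg'v, mul_inv_rev, inv_mul_cancel_right]
  exact inv_mem hv
end

section
/- Let J ⊆ Γ₀ with W_J finite, and let a ∉ J with W_{J+a} finite. Let w_J and w_{J+a} be the longest elements of W_J and W_{J+a}. Then v := w_J w_{J+a} satisfies ℓ(v) = ℓ(w_{J+a}) − ℓ(w_J), and conjugation by v maps W_K onto W_J where K = (J + a) − ι_{J+a}(a), with ι_{J+a} the diagram automorphism induced by w_{J+a} (w_{J+a}·α_k = −α_{ι_{J+a}(k)}). -/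
open CoxeterSystem

/-!
Write `N(w)` for the set of right inversions of `w`, the reflections `t` with `ℓ(w t) < ℓ(w)`.
Tits's permutation representation of `W` on `W × ZMod 2` produces a cocycle
`n(x y, t) = n(y, t) + n(x, y t y⁻¹)` with `n(w, t) = 1 ↔ t ∈ N(w)`; this gives the strong
exchange condition, `|N(w)| = ℓ(w)`, and that the reduced words of an element of `W_L` only use
letters of `L`. If `w₀` has maximal length in `W_L`, then `N(w₀)` is the set of all reflections of
`W_L`, and the cocycle identity gives `N(w₀ u) = N(w₀) \ N(u)`, so `ℓ(w₀ u) = ℓ(w₀) - ℓ(u)` for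
`u ∈ W_L`. Hence `w₀` is an involution and conjugation by `w₀` permutes the simple reflections of
`W_L`. Taking `u = w_J` gives the length formula. Conjugation by `w_{J+a}` sends the generators of
`W_K` onto those of `W_J` (the simple reflections are pairwise distinct, as the geometric
representation shows), and conjugation by `w_J` preserves `W_J`.
-/

/-! ## Tits's representation and the strong exchange condition -/

theorem List.count_map_range_two_mul {α : Type*} [BEq α] (f : ℕ → α) (n : ℕ)
    (hf : ∀ k, f (n + k) = f k) (a : α) :
    ((List.range (2 * n)).map f).count a = 2 * ((List.range n).map f).count a := by
  rw [two_mul, List.range_add, List.map_append, List.map_map, List.count_append]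
  simp only [Function.comp_def, hf]
  ring

namespace CoxeterSystem

variable {B W : Type*} [Group W] {M : CoxeterMatrix B} (cs : CoxeterSystem M W)

theorem reverse_alternatingWord_two_mul (i j : B) (n : ℕ) :
    (alternatingWord i j (2 * n)).reverse = alternatingWord j i (2 * n) := by
  induction n with
  | zero => rfl
  | succ n ih =>
    rw [show 2 * (n + 1) = 2 * n + 1 + 1 by ring, alternatingWord_succ', alternatingWord_succ',
      alternatingWord_succ j i, alternatingWord_succ i j]
    simp [ih]

theorem leftInvSeq_alternatingWord_two_mul (i j : B) (n : ℕ) :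
    cs.leftInvSeq (alternatingWord i j (2 * n)) =
      (List.range (2 * n)).map fun k => cs.simple i * (cs.simple j * cs.simple i) ^ k := by
  refine List.ext_getElem (by simp) fun k hk _ => ?_
  rw [getElem_leftInvSeq_alternatingWord cs i j n k (by simpa using hk),
    prod_alternatingWord_eq_mul_pow]
  simp [show (2 * k + 1) / 2 = k by omega]

section TitsRepresentation

open scoped Classical

noncomputable def titsPerm (i : B) : Equiv.Perm (W × ZMod 2) :=
  Function.Involutive.toPerm
    (fun p => (cs.simple i * p.1 * cs.simple i, p.2 + if p.1 = cs.simple i then 1 else 0))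
    (by
      rintro ⟨w, ε⟩
      have hiff : cs.simple i * w * cs.simple i = cs.simple i ↔ w = cs.simple i := by
        rw [mul_eq_right, mul_eq_one_iff_eq_inv', inv_simple]
      ext
      · simp [mul_assoc]
      · simp only [hiff, add_assoc, CharTwo.add_self_eq_zero, add_zero])

theorem titsPerm_apply (i : B) (w : W) (ε : ZMod 2) :
    cs.titsPerm i (w, ε) =
      (cs.simple i * w * cs.simple i, ε + if w = cs.simple i then 1 else 0) :=
  rfl

theorem titsPerm_wordProd (ω : List B) (t : W) (ε : ZMod 2) :
    (ω.map cs.titsPerm).prod (t, ε) =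
      (cs.wordProd ω * t * (cs.wordProd ω)⁻¹, ε + (cs.rightInvSeq ω).count t) := by
  induction ω with
  | nil => simp
  | cons i ω ih =>
    have hiff : cs.wordProd ω * t * (cs.wordProd ω)⁻¹ = cs.simple i ↔
        (cs.wordProd ω)⁻¹ * cs.simple i * cs.wordProd ω = t := by
      constructor <;> intro h <;> rw [← h] <;> group
    rw [List.map_cons, List.prod_cons, Equiv.Perm.mul_apply, ih, titsPerm_apply, rightInvSeq,
      List.count_cons, wordProd_cons]
    ext
    · simp [mul_assoc]
    · simp only [hiff, beq_iff_eq]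
      push_cast
      ring

theorem titsPerm_alternatingWord (i j : B) (n : ℕ) :
    ((alternatingWord i j (2 * n)).map cs.titsPerm).prod =
      (cs.titsPerm i * cs.titsPerm j) ^ n := by
  induction n with
  | zero => rfl
  | succ n ih =>
    rw [show 2 * (n + 1) = 2 * n + 1 + 1 by ring, alternatingWord_succ', alternatingWord_succ']
    simp [ih, pow_succ', mul_assoc]

theorem titsPerm_isLiftable : M.IsLiftable cs.titsPerm := by
  intro i j
  ext ⟨t, ε⟩ : 1
  -- the inversion sequence of the braid word is `M i j`-periodic, so every entry occurs an even
  -- number of times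
  have hperiodic : ∀ k, cs.simple j * (cs.simple i * cs.simple j) ^ (M i j + k) =
      cs.simple j * (cs.simple i * cs.simple j) ^ k := by
    simp [pow_add, simple_mul_simple_pow]
  have hprod : cs.wordProd (alternatingWord i j (2 * M i j)) = 1 := by
    simp [prod_alternatingWord_eq_mul_pow, simple_mul_simple_pow]
  rw [← titsPerm_alternatingWord, titsPerm_wordProd, hprod, ← reverse_alternatingWord_two_mul j i,
    rightInvSeq_reverse, List.count_reverse, leftInvSeq_alternatingWord_two_mul,
    List.count_map_range_two_mul _ _ hperiodic]
  ext
  · simp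
  · simp [show (2 : ZMod 2) = 0 from rfl]

noncomputable def titsRep : W →* Equiv.Perm (W × ZMod 2) :=
  cs.lift ⟨cs.titsPerm, cs.titsPerm_isLiftable⟩

theorem titsRep_wordProd (ω : List B) (t : W) (ε : ZMod 2) :
    cs.titsRep (cs.wordProd ω) (t, ε) =
      (cs.wordProd ω * t * (cs.wordProd ω)⁻¹, ε + (cs.rightInvSeq ω).count t) := by
  rw [← titsPerm_wordProd, wordProd, map_list_prod, List.map_map]
  congr 2
  exact List.map_congr_left fun i _ => cs.lift_apply_simple cs.titsPerm_isLiftable i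

/-- The parity of the number of occurrences of `t` in the right inversion sequence of any word
for `w`; the representation `titsRep` is what makes it independent of the word. -/
noncomputable def reflParity (w t : W) : ZMod 2 := (cs.titsRep w (t, 0)).2

theorem reflParity_wordProd (ω : List B) (t : W) :
    cs.reflParity (cs.wordProd ω) t = (cs.rightInvSeq ω).count t := by
  simp [reflParity, titsRep_wordProd]

theorem titsRep_apply (w t : W) (ε : ZMod 2) :
    cs.titsRep w (t, ε) = (w * t * w⁻¹, ε + cs.reflParity w t) := by
  obtain ⟨ω, rfl⟩ := cs.wordProd_surjective w
  simp [titsRep_wordProd, reflParity_wordProd]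

theorem reflParity_one (t : W) : cs.reflParity 1 t = 0 := by
  simp [reflParity]

theorem reflParity_mul (x y t : W) :
    cs.reflParity (x * y) t = cs.reflParity y t + cs.reflParity x (y * t * y⁻¹) := by
  change (cs.titsRep (x * y) (t, 0)).2 = _
  rw [map_mul, Equiv.Perm.mul_apply, cs.titsRep_apply y, cs.titsRep_apply x, zero_add]

theorem reflParity_simple_self (i : B) : cs.reflParity (cs.simple i) (cs.simple i) = 1 := by
  simpa using cs.reflParity_wordProd [i] (cs.simple i)

theorem IsReflection.reflParity_self {t : W} (ht : cs.IsReflection t) :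
    cs.reflParity t t = 1 := by
  obtain ⟨v, i, rfl⟩ := ht
  have hs : v⁻¹ * (v * cs.simple i * v⁻¹) * v⁻¹⁻¹ = cs.simple i := by group
  have hinv : cs.reflParity v⁻¹ (v * cs.simple i * v⁻¹) + cs.reflParity v (cs.simple i) = 0 := by
    have h := cs.reflParity_mul v v⁻¹ (v * cs.simple i * v⁻¹)
    rwa [mul_inv_cancel, reflParity_one, hs, eq_comm] at h
  rw [reflParity_mul, hs, reflParity_mul, reflParity_simple_self, inv_simple,
    simple_mul_simple_cancel_right]
  linear_combination hinv

theorem mem_rightInvSeq_of_reflParity_eq_one {ω : List B} {t : W}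
    (h : cs.reflParity (cs.wordProd ω) t = 1) : t ∈ cs.rightInvSeq ω := by
  refine List.count_pos_iff.mp (Nat.pos_of_ne_zero fun h0 => ?_)
  rw [reflParity_wordProd, h0, Nat.cast_zero] at h
  exact zero_ne_one h

theorem isRightInversion_of_reflParity_eq_one {w t : W} (h : cs.reflParity w t = 1) :
    cs.IsRightInversion w t := by
  obtain ⟨ω, hω, rfl⟩ := cs.exists_isReduced w
  exact cs.isRightInversion_of_mem_rightInvSeq hω (cs.mem_rightInvSeq_of_reflParity_eq_one h)

theorem reflParity_eq_one_iff {w t : W} (ht : cs.IsReflection t) :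
    cs.reflParity w t = 1 ↔ cs.IsRightInversion w t := by
  refine ⟨cs.isRightInversion_of_reflParity_eq_one, fun hwt => ?_⟩
  by_contra hne
  have h0 : cs.reflParity w t = 0 := (by decide : ∀ x : ZMod 2, x ≠ 1 → x = 0) _ hne
  have hwt' : cs.IsRightInversion (w * t) t := by
    apply cs.isRightInversion_of_reflParity_eq_one
    rw [reflParity_mul, ht.reflParity_self, mul_inv_cancel_right, h0, add_zero]
  exact ht.isRightInversion_mul_left_iff.mp hwt' hwt

end TitsRepresentation

/-- The strong exchange condition. -/
theorem mem_rightInvSeq_iff {ω : List B} (hω : cs.IsReduced ω) {t : W} :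
    t ∈ cs.rightInvSeq ω ↔ cs.IsRightInversion (cs.wordProd ω) t :=
  ⟨cs.isRightInversion_of_mem_rightInvSeq hω, fun h =>
    cs.mem_rightInvSeq_of_reflParity_eq_one ((cs.reflParity_eq_one_iff h.1).mpr h)⟩

def rightInvSet (w : W) : Set W := {t | cs.IsRightInversion w t}

theorem rightInvSet_wordProd [DecidableEq W] {ω : List B} (hω : cs.IsReduced ω) :
    cs.rightInvSet (cs.wordProd ω) = (cs.rightInvSeq ω).toFinset := by
  ext t
  simp [rightInvSet, cs.mem_rightInvSeq_iff hω]

theorem rightInvSet_finite (w : W) : (cs.rightInvSet w).Finite := by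
  classical
  obtain ⟨ω, hω, rfl⟩ := cs.exists_isReduced w
  rw [cs.rightInvSet_wordProd hω]
  exact Finset.finite_toSet _

theorem ncard_rightInvSet (w : W) : (cs.rightInvSet w).ncard = cs.length w := by
  classical
  obtain ⟨ω, hω, rfl⟩ := cs.exists_isReduced w
  rw [cs.rightInvSet_wordProd hω, Set.ncard_coe_finset,
    List.toFinset_card_of_nodup (IsReduced.nodup_rightInvSeq cs hω), length_rightInvSeq, hω]

theorem exists_isReduced_sublist (ω : List B) :
    ∃ ω' : List B, ω'.Sublist ω ∧ cs.IsReduced ω' ∧ cs.wordProd ω' = cs.wordProd ω := by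
  induction ω using List.reverseRecOn with
  | nil => exact ⟨[], List.Sublist.refl _, by simp [IsReduced], rfl⟩
  | append_singleton ω i ih =>
    obtain ⟨ω', hsub, hω', hprod⟩ := ih
    rw [wordProd_append, wordProd_singleton, ← hprod]
    rcases cs.length_mul_simple (cs.wordProd ω') i with hlen | hlen
    · refine ⟨ω' ++ [i], hsub.append (List.Sublist.refl _), ?_, by simp [wordProd_append]⟩
      simp [IsReduced, wordProd_append, hlen, hω'.eq]
    · have hinv : cs.IsRightInversion (cs.wordProd ω') (cs.simple i) :=
        ⟨cs.isReflection_simple i, by omega⟩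
      obtain ⟨j, hj, hji⟩ := List.mem_iff_getElem.mp ((cs.mem_rightInvSeq_iff hω').mpr hinv)
      have herase : cs.wordProd ω' * cs.simple i = cs.wordProd (ω'.eraseIdx j) := by
        rw [← hji, ← List.getD_eq_getElem _ 1 hj, wordProd_mul_getD_rightInvSeq]
      rw [length_rightInvSeq] at hj
      refine ⟨ω'.eraseIdx j, ((ω'.eraseIdx_sublist j).trans hsub).trans
        (List.sublist_append_left _ _), ?_, herase.symm⟩
      have := List.length_eraseIdx_add_one hj
      rw [IsReduced, ← herase]
      rw [IsReduced] at hω'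
      omega

theorem simple_mem_parabolic {L : Set B} {i : B} (hi : i ∈ L) : cs.simple i ∈ parabolic cs L :=
  Subgroup.subset_closure ⟨i, hi, rfl⟩

theorem parabolic_mono {L L' : Set B} (h : L ⊆ L') : parabolic cs L ≤ parabolic cs L' :=
  Subgroup.closure_mono (Set.image_mono h)

theorem wordProd_mem_parabolic {L : Set B} {ω : List B} (hω : ∀ i ∈ ω, i ∈ L) :
    cs.wordProd ω ∈ parabolic cs L :=
  Subgroup.list_prod_mem _ fun _ hx => by
    obtain ⟨i, hi, rfl⟩ := List.mem_map.mp hx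
    exact cs.simple_mem_parabolic (hω i hi)

theorem mem_parabolic_iff {L : Set B} {w : W} :
    w ∈ parabolic cs L ↔ ∃ ω : List B, (∀ i ∈ ω, i ∈ L) ∧ cs.wordProd ω = w := by
  refine ⟨fun hw => ?_, fun ⟨ω, hω, hw⟩ => hw ▸ cs.wordProd_mem_parabolic hω⟩
  induction hw using Subgroup.closure_induction with
  | mem _ hx =>
    obtain ⟨i, hi, rfl⟩ := hx
    exact ⟨[i], by simpa using hi, cs.wordProd_singleton i⟩
  | one => exact ⟨[], by simp, cs.wordProd_nil⟩
  | mul _ _ _ _ hx hy =>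
    obtain ⟨ω₁, h₁, rfl⟩ := hx
    obtain ⟨ω₂, h₂, rfl⟩ := hy
    refine ⟨ω₁ ++ ω₂, fun i hi => ?_, cs.wordProd_append ω₁ ω₂⟩
    exact (List.mem_append.mp hi).elim (h₁ i) (h₂ i)
  | inv _ _ hx =>
    obtain ⟨ω, hω, rfl⟩ := hx
    exact ⟨ω.reverse, by simpa using hω, cs.wordProd_reverse ω⟩

theorem exists_isReduced_of_mem_parabolic {L : Set B} {w : W} (hw : w ∈ parabolic cs L) :
    ∃ ω : List B, (∀ i ∈ ω, i ∈ L) ∧ cs.IsReduced ω ∧ cs.wordProd ω = w := by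
  obtain ⟨ω, hω, rfl⟩ := (cs.mem_parabolic_iff).mp hw
  obtain ⟨ω', hsub, hω', hprod⟩ := cs.exists_isReduced_sublist ω
  exact ⟨ω', fun i hi => hω i (hsub.subset hi), hω', hprod⟩

theorem rightInvSet_subset_parabolic {L : Set B} {w : W} (hw : w ∈ parabolic cs L) :
    cs.rightInvSet w ⊆ parabolic cs L := by
  obtain ⟨ω, hω, hred, rfl⟩ := cs.exists_isReduced_of_mem_parabolic hw
  intro t ht
  obtain ⟨j, hj, rfl⟩ := List.mem_iff_getElem.mp ((cs.mem_rightInvSeq_iff hred).mpr ht)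
  have herase := cs.wordProd_mul_getD_rightInvSeq ω j
  rw [List.getD_eq_getElem _ 1 hj, ← eq_inv_mul_iff_mul_eq] at herase
  rw [herase]
  exact mul_mem (inv_mem (cs.wordProd_mem_parabolic hω))
    (cs.wordProd_mem_parabolic fun i hi => hω i ((ω.eraseIdx_sublist j).subset hi))

theorem exists_eq_simple_of_mem_parabolic {L : Set B} {w : W} (hw : w ∈ parabolic cs L)
    (hlen : cs.length w = 1) : ∃ i ∈ L, w = cs.simple i := by
  obtain ⟨ω, hω, hred, rfl⟩ := cs.exists_isReduced_of_mem_parabolic hw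
  obtain ⟨i, rfl⟩ := List.length_eq_one_iff.mp (hred.symm.trans hlen)
  exact ⟨i, hω i (List.mem_singleton_self i), cs.wordProd_singleton i⟩

end CoxeterSystem

/-! ## The geometric representation -/

namespace CoxeterMatrix

variable {B : Type*} (M : CoxeterMatrix B)

open Real Finsupp

/-- The linear form `B(α_i, ·)` of the geometric representation. An infinite entry is stored as
`M i j = 0`, and then `π / 0 = 0` gives the standard value `-cos 0 = -1`. -/
noncomputable def cosForm (i : B) : (B →₀ ℝ) →ₗ[ℝ] ℝ :=
  linearCombination ℝ fun j => -cos (π / M i j)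

theorem cosForm_single (i j : B) : M.cosForm i (single j 1) = -cos (π / M i j) := by
  simp [cosForm]

theorem cosForm_single_self (i : B) : M.cosForm i (single i 1) = 1 := by
  simp [cosForm_single]

noncomputable def geomReflection (i : B) : Module.End ℝ (B →₀ ℝ) :=
  LinearMap.id - (2 • M.cosForm i).smulRight (single i 1)

theorem geomReflection_apply (i : B) (v : B →₀ ℝ) :
    M.geomReflection i v = v - (2 * M.cosForm i v) • single i 1 := by
  simp [geomReflection, two_smul, add_smul, two_mul]

theorem geomReflection_of_cosForm_eq_zero {i : B} {v : B →₀ ℝ} (hv : M.cosForm i v = 0) :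
    M.geomReflection i v = v := by
  simp [geomReflection_apply, hv]

theorem geomReflection_mul_self (i : B) : M.geomReflection i * M.geomReflection i = 1 := by
  refine LinearMap.ext fun v => ?_
  simp only [Module.End.mul_apply, geomReflection_apply, map_sub, map_smul, cosForm_single_self,
    Module.End.one_apply]
  module

/-- `sin (π / M i j)` times a root of the rank-two subsystem spanned by `α_i` and `α_j`. -/
noncomputable def dihedralRoot (i j : B) (x : ℝ) : B →₀ ℝ :=
  sin ((x + 1) * (π / M i j)) • single i 1 + sin (x * (π / M i j)) • single j 1

theorem geomReflection_mul_apply_dihedralRoot (i j : B) (x : ℝ) :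
    (M.geomReflection i * M.geomReflection j) (M.dihedralRoot i j x) =
      M.dihedralRoot i j (x + 2) := by
  set θ := π / M i j with hθ
  have hij : M.cosForm i (single j 1) = -cos θ := M.cosForm_single i j
  have hji : M.cosForm j (single i 1) = -cos θ := by rw [cosForm_single, M.symmetric]
  have hsin : ∀ y z w : ℝ, z = y + 1 → w = y - 1 →
      sin (z * θ) + sin (w * θ) = 2 * cos θ * sin (y * θ) := by
    rintro y z w rfl rfl
    rw [add_mul, sub_mul, one_mul, sin_add, sin_sub]
    ring
  have h₁ := hsin (x + 1) (x + 2) x (by ring) (by ring)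
  have h₂ := hsin (x + 2) (x + 2 + 1) (x + 1) (by ring) (by ring)
  simp only [dihedralRoot, Module.End.mul_apply, geomReflection_apply, map_add, map_sub, map_smul,
    cosForm_single_self, hij, hji, ← hθ]
  match_scalars
  · linear_combination -h₂ - 2 * cos θ * h₁
  · linear_combination -h₁

theorem pow_geomReflection_mul_apply_dihedralRoot (i j : B) (x : ℝ) (n : ℕ) :
    ((M.geomReflection i * M.geomReflection j) ^ n) (M.dihedralRoot i j x) =
      M.dihedralRoot i j (x + 2 * n) := by
  induction n with
  | zero => simp
  | succ n ih =>
    rw [pow_succ', Module.End.mul_apply, ih, geomReflection_mul_apply_dihedralRoot]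
    push_cast
    ring_nf

theorem dihedralRoot_add_two_mul {i j : B} (hm : M i j ≠ 0) (x : ℝ) :
    M.dihedralRoot i j (x + 2 * M i j) = M.dihedralRoot i j x := by
  have hperiod : ∀ y : ℝ, (y + 2 * M i j) * (π / M i j) = y * (π / M i j) + 2 * π := by
    intro y
    field_simp
  simp only [dihedralRoot, add_right_comm x, hperiod, sin_add_two_pi]

theorem sin_pi_div_pos {i j : B} (hm : 2 ≤ M i j) : 0 < sin (π / M i j) := by
  have hm' : (1 : ℝ) < M i j := by exact_mod_cast hm
  exact sin_pos_of_pos_of_lt_pi (by positivity) (div_lt_self pi_pos hm')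

theorem pow_geomReflection_mul_single_left {i j : B} (hm : 2 ≤ M i j) :
    ((M.geomReflection i * M.geomReflection j) ^ M i j) (single i 1) = single i 1 := by
  have h := M.pow_geomReflection_mul_apply_dihedralRoot i j 0 (M i j)
  rw [M.dihedralRoot_add_two_mul (by omega), dihedralRoot] at h
  simp only [zero_add, one_mul, zero_mul, sin_zero, zero_smul, add_zero, map_smul] at h
  exact smul_right_injective _ (M.sin_pi_div_pos hm).ne' h

theorem pow_geomReflection_mul_single_right {i j : B} (hm : 2 ≤ M i j) :
    ((M.geomReflection i * M.geomReflection j) ^ M i j) (single j 1) = single j 1 := by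
  have h := M.pow_geomReflection_mul_apply_dihedralRoot i j (-1) (M i j)
  rw [M.dihedralRoot_add_two_mul (by omega), dihedralRoot] at h
  simp only [neg_add_cancel, zero_mul, sin_zero, zero_smul, zero_add, neg_one_mul, sin_neg,
    neg_smul, map_neg, map_smul, neg_inj] at h
  exact smul_right_injective _ (M.sin_pi_div_pos hm).ne' h

theorem exists_cosForm_sub_sub_eq_zero {i j : B} (hm : 2 ≤ M i j) (v : B →₀ ℝ) :
    ∃ α β : ℝ, M.cosForm i (v - α • single i 1 - β • single j 1) = 0 ∧
      M.cosForm j (v - α • single i 1 - β • single j 1) = 0 := by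
  set c := cos (π / M i j)
  have hc : 1 - c ^ 2 ≠ 0 := by
    nlinarith [sin_sq_add_cos_sq (π / M i j), M.sin_pi_div_pos hm]
  have hij : M.cosForm i (single j 1) = -c := M.cosForm_single i j
  have hji : M.cosForm j (single i 1) = -c := by rw [cosForm_single, M.symmetric]
  refine ⟨(M.cosForm i v + c * M.cosForm j v) / (1 - c ^ 2),
    (M.cosForm j v + c * M.cosForm i v) / (1 - c ^ 2), ?_, ?_⟩ <;>
  · simp only [map_sub, map_smul, cosForm_single_self, hij, hji, smul_eq_mul]
    field_simp
    ring

theorem geomReflection_isLiftable : M.IsLiftable M.geomReflection := by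
  intro i j
  rcases eq_or_ne i j with rfl | hij
  · simp [geomReflection_mul_self]
  rcases eq_or_ne (M i j) 0 with h0 | h0
  · simp [h0]
  have hm : 2 ≤ M i j := by have := M.off_diagonal i j hij; omega
  refine LinearMap.ext fun v => ?_
  -- `σ_i` and `σ_j` fix the part of `v` orthogonal to `α_i` and `α_j`
  obtain ⟨α, β, hi, hj⟩ := M.exists_cosForm_sub_sub_eq_zero hm v
  set v' := v - α • single i 1 - β • single j 1
  have hfix : (M.geomReflection i * M.geomReflection j) v' = v' := by
    rw [Module.End.mul_apply, geomReflection_of_cosForm_eq_zero _ hj,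
      geomReflection_of_cosForm_eq_zero _ hi]
  calc _ = ((M.geomReflection i * M.geomReflection j) ^ M i j)
        (v' + α • single i 1 + β • single j 1) := by
          congr 1
          simp only [v']
          abel
    _ = v := by
      rw [map_add, map_add, map_smul, map_smul, pow_geomReflection_mul_single_left _ hm,
        pow_geomReflection_mul_single_right _ hm, Module.End.pow_apply, Function.iterate_fixed hfix]
      simp only [v']
      abel

end CoxeterMatrix

namespace CoxeterSystem

variable {B W : Type*} [Group W] {M : CoxeterMatrix B} (cs : CoxeterSystem M W)

theorem simple_injective : Function.Injective cs.simple := by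
  intro i j h
  by_contra hij
  have hσ : M.geomReflection i = M.geomReflection j := by
    rw [← cs.lift_apply_simple M.geomReflection_isLiftable,
      ← cs.lift_apply_simple M.geomReflection_isLiftable, h]
  -- `σ_i α_i = -α_i`, whereas `σ_j α_i` has `α_i`-coordinate `1`
  have := congrArg (fun σ : Module.End ℝ (B →₀ ℝ) => σ (Finsupp.single i 1) i) hσ
  simp [CoxeterMatrix.geomReflection_apply, CoxeterMatrix.cosForm_single_self,
    Finsupp.single_eq_of_ne hij] at this

/-! ## Longest elements of parabolic subgroups -/

def IsLongestElement (L : Set B) (w : W) : Prop :=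
  w ∈ parabolic cs L ∧ ∀ u ∈ parabolic cs L, cs.length u ≤ cs.length w

namespace IsLongestElement

variable {cs} {L : Set B} {w₀ : W}

theorem isRightInversion (h : cs.IsLongestElement L w₀) {t : W} (ht : cs.IsReflection t)
    (htL : t ∈ parabolic cs L) : cs.IsRightInversion w₀ t :=
  ⟨ht, lt_of_le_of_ne (h.2 _ (mul_mem h.1 htL)) (ht.length_mul_left_ne w₀)⟩

theorem isRightInversion_mul_iff (h : cs.IsLongestElement L w₀) {u t : W}
    (hu : u ∈ parabolic cs L) (ht : cs.IsReflection t) (htL : t ∈ parabolic cs L) :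
    cs.IsRightInversion (w₀ * u) t ↔ ¬cs.IsRightInversion u t := by
  have hconj : cs.IsRightInversion w₀ (u * t * u⁻¹) :=
    h.isRightInversion (ht.conj u) (mul_mem (mul_mem hu htL) (inv_mem hu))
  rw [← cs.reflParity_eq_one_iff ht, ← cs.reflParity_eq_one_iff ht, reflParity_mul,
    (cs.reflParity_eq_one_iff (ht.conj u)).mpr hconj]
  generalize cs.reflParity u t = x
  revert x
  decide

theorem rightInvSet_mul (h : cs.IsLongestElement L w₀) {u : W} (hu : u ∈ parabolic cs L) :
    cs.rightInvSet (w₀ * u) = cs.rightInvSet w₀ \ cs.rightInvSet u := by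
  ext t
  constructor
  · intro ht
    have htL := cs.rightInvSet_subset_parabolic (mul_mem h.1 hu) ht
    exact ⟨h.isRightInversion ht.1 htL, (h.isRightInversion_mul_iff hu ht.1 htL).mp ht⟩
  · rintro ⟨ht, htu⟩
    have htL := cs.rightInvSet_subset_parabolic h.1 ht
    exact (h.isRightInversion_mul_iff hu ht.1 htL).mpr htu

theorem length_mul_add_length_left (h : cs.IsLongestElement L w₀) {u : W}
    (hu : u ∈ parabolic cs L) : cs.length (w₀ * u) + cs.length u = cs.length w₀ := by
  have hsub : cs.rightInvSet u ⊆ cs.rightInvSet w₀ := fun t ht =>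
    h.isRightInversion ht.1 (cs.rightInvSet_subset_parabolic hu ht)
  have hcard := congrArg Set.ncard (h.rightInvSet_mul hu)
  rw [Set.ncard_sdiff hsub (cs.rightInvSet_finite u), ncard_rightInvSet, ncard_rightInvSet,
    ncard_rightInvSet] at hcard
  have := h.2 u hu
  omega

theorem inv_eq (h : cs.IsLongestElement L w₀) : w₀⁻¹ = w₀ := by
  have hlen := h.length_mul_add_length_left h.1
  exact inv_eq_of_mul_eq_one_right (cs.length_eq_zero_iff.mp (by omega))

theorem length_mul_add_length_right (h : cs.IsLongestElement L w₀) {u : W}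
    (hu : u ∈ parabolic cs L) : cs.length (u * w₀) + cs.length u = cs.length w₀ := by
  rw [← cs.length_inv (u * w₀), mul_inv_rev, h.inv_eq, ← cs.length_inv u]
  exact h.length_mul_add_length_left (inv_mem hu)

theorem exists_conj_simple_eq (h : cs.IsLongestElement L w₀) {k : B} (hk : k ∈ L) :
    ∃ m ∈ L, w₀ * cs.simple k * w₀⁻¹ = cs.simple m := by
  have hk' := cs.simple_mem_parabolic hk
  refine cs.exists_eq_simple_of_mem_parabolic (mul_mem (mul_mem h.1 hk') (inv_mem h.1)) ?_
  have h₁ := h.length_mul_add_length_left hk'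
  have h₂ := h.length_mul_add_length_right (mul_mem h.1 hk')
  rw [length_simple] at h₁
  rw [h.inv_eq]
  omega

open scoped Pointwise

theorem conj_smul_parabolic_diff_le (h : cs.IsLongestElement L w₀) {a b : B}
    (hb : w₀ * cs.simple a * w₀⁻¹ = cs.simple b) :
    MulAut.conj w₀ • parabolic cs (L \ {b}) ≤ parabolic cs (L \ {a}) := by
  rw [parabolic, Subgroup.smul_closure, Subgroup.closure_le]
  rintro _ ⟨_, ⟨k, ⟨hkL, hkb⟩, rfl⟩, rfl⟩
  obtain ⟨m, hmL, hm⟩ := h.exists_conj_simple_eq hkL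
  change w₀ * cs.simple k * w₀⁻¹ ∈ parabolic cs (L \ {a})
  rw [hm]
  refine cs.simple_mem_parabolic ⟨hmL, fun hma => hkb (cs.simple_injective ?_)⟩
  rw [Set.mem_singleton_iff.mp hma] at hm
  calc cs.simple k = w₀⁻¹ * (w₀ * cs.simple k * w₀⁻¹) * w₀ := by group
    _ = cs.simple b := by rw [hm, ← hb, h.inv_eq]

theorem conj_smul_parabolic_diff (h : cs.IsLongestElement L w₀) {a b : B}
    (hb : w₀ * cs.simple a * w₀⁻¹ = cs.simple b) :
    MulAut.conj w₀ • parabolic cs (L \ {b}) = parabolic cs (L \ {a}) := by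
  have hb' : w₀ * cs.simple b * w₀⁻¹ = cs.simple a :=
    calc w₀ * cs.simple b * w₀⁻¹ = w₀⁻¹ * cs.simple b * w₀ := by rw [h.inv_eq]
      _ = cs.simple a := by rw [← hb]; group
  refine le_antisymm (h.conj_smul_parabolic_diff_le hb) ?_
  rw [Subgroup.subset_pointwise_smul_iff, ← map_inv, h.inv_eq]
  exact h.conj_smul_parabolic_diff_le hb'

theorem map_conj_mul_parabolic_diff (h : cs.IsLongestElement L w₀) {a b : B} {u : W}
    (hu : u ∈ parabolic cs (L \ {a})) (hb : w₀ * cs.simple a * w₀⁻¹ = cs.simple b) :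
    Subgroup.map (MulAut.conj (u * w₀)).toMonoidHom (parabolic cs (L \ {b})) =
      parabolic cs (L \ {a}) := by
  change MulAut.conj (u * w₀) • parabolic cs (L \ {b}) = _
  rw [map_mul, mul_smul, h.conj_smul_parabolic_diff hb, Subgroup.conj_smul_eq_self_of_mem hu]

end IsLongestElement

end CoxeterSystem

theorem longest_element_wall_crossing_general {B W : Type*} [Group W]
    {M : CoxeterMatrix B} (cs : CoxeterSystem M W) (J : Set B) (a : B) (ha : a ∉ J)
    (wJ wJa : W)
    (hwJ : wJ ∈ parabolic cs J ∧ ∀ u ∈ parabolic cs J, cs.length u ≤ cs.length wJ)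
    (hwJa : wJa ∈ parabolic cs (insert a J) ∧
      ∀ u ∈ parabolic cs (insert a J), cs.length u ≤ cs.length wJa)
    (b : B) (hb : wJa * cs.simple a * wJa⁻¹ = cs.simple b) :
    cs.length (wJ * wJa) + cs.length wJ = cs.length wJa ∧
    Subgroup.map (MulAut.conj (wJ * wJa)).toMonoidHom
        (parabolic cs (insert a J \ {b})) = parabolic cs J := by
  have hwJa' : cs.IsLongestElement (insert a J) wJa := hwJa
  have hJ : insert a J \ {a} = J := Set.insert_sdiff_self_of_notMem ha
  refine ⟨hwJa'.length_mul_add_length_right (cs.parabolic_mono (Set.subset_insert a J) hwJ.1), ?_⟩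
  have hconj := hwJa'.map_conj_mul_parabolic_diff (hJ ▸ hwJ.1) hb
  rwa [hJ] at hconj

/-- Let `W_J` and `W_{J+a}` be finite, with longest elements `w_J`, `w_{J+a}`.
Then `v := w_J w_{J+a}` satisfies `ℓ(v) = ℓ(w_{J+a}) − ℓ(w_J)`, and conjugation by `v` maps `W_K`
onto `W_J`, where `K = (J + a) − ι_{J+a}(a)` and `ι_{J+a}(a)` is the vertex `b` with
`w_{J+a} s_a w_{J+a}⁻¹ = s_b` (the diagram automorphism induced by the longest element). -/
theorem longest_element_wall_crossing {B W : Type*} [Group W]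
    {M : CoxeterMatrix B} (cs : CoxeterSystem M W) (J : Set B) (a : B) (ha : a ∉ J)
    (hJfin : ((parabolic cs J : Set W)).Finite)
    (hJafin : ((parabolic cs (insert a J) : Set W)).Finite)
    (wJ wJa : W)
    (hwJ : wJ ∈ parabolic cs J ∧ ∀ u ∈ parabolic cs J, cs.length u ≤ cs.length wJ)
    (hwJa : wJa ∈ parabolic cs (insert a J) ∧
      ∀ u ∈ parabolic cs (insert a J), cs.length u ≤ cs.length wJa)
    (b : B) (hb : wJa * cs.simple a * wJa⁻¹ = cs.simple b) :
    cs.length (wJ * wJa) + cs.length wJ = cs.length wJa ∧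
    Subgroup.map (MulAut.conj (wJ * wJa)).toMonoidHom
        (parabolic cs (insert a J \ {b})) = parabolic cs J :=
  longest_element_wall_crossing_general cs J a ha wJ wJa hwJ hwJa b hb
end
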